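/- arXiv:0707.0027 — 2 statements merged into one kernel-verified Lean document; each statement's English description precedes it below -/
import Mathlib

section
/- Corollary to the First Transpositional Relation: Let q(s,t) : [−ε,ε] × [a,b] → ℝⁿ be a C² variation (so that its mixed second partial derivatives commute). Then for every (s,t) and every index j, ∂u^j/∂s = ∂(δθ^j)/∂t + γ^j_{ab}(q) u^a δθ^b, where repeated indices a, b are summed from 1 to n; i.e., the variation of the quasi-velocity satisfies δu^j = d(δθ^j) + γ^j_{ab} u^a δθ^b. -/
open Matrix Real

noncomputable section

/-- Partial derivative of `f : ℝⁿ → ℝ` at `x` in the `j`-th coordinate direction. -/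
def pder {n : ℕ} (f : (Fin n → ℝ) → ℝ) (x : Fin n → ℝ) (j : Fin n) : ℝ :=
  fderiv ℝ f x (Pi.single j 1)

/-- Hamel coefficients `γ^s_{pq}(x) = (∂Ψ^s_i/∂x^j − ∂Ψ^s_j/∂x^i) Φ^i_p Φ^j_q`. -/
def hamel {n : ℕ} (Ψ Φ : (Fin n → ℝ) → Matrix (Fin n) (Fin n) ℝ)
    (x : Fin n → ℝ) (s p r : Fin n) : ℝ :=
  ∑ i, ∑ j, (pder (fun y => Ψ y s i) x j - pder (fun y => Ψ y s j) x i) * Φ x i p * Φ x j r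

/-- Quasi-velocities `u^j(s,t) = Ψ^j_i(q(s,t)) ∂q^i/∂t` of a variation `q`. -/
def qvel {n : ℕ} (Ψ : (Fin n → ℝ) → Matrix (Fin n) (Fin n) ℝ)
    (q : ℝ → ℝ → Fin n → ℝ) (s t : ℝ) : Fin n → ℝ :=
  fun j => ∑ i, Ψ (q s t) j i * deriv (fun t' => q s t' i) t

/-- Quasi-coordinate variations `δθ^j(s,t) = Ψ^j_i(q(s,t)) ∂q^i/∂s` of a variation `q`. -/
def qvar {n : ℕ} (Ψ : (Fin n → ℝ) → Matrix (Fin n) (Fin n) ℝ)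
    (q : ℝ → ℝ → Fin n → ℝ) (s t : ℝ) : Fin n → ℝ :=
  fun j => ∑ i, Ψ (q s t) j i * deriv (fun s' => q s' t i) s

lemma sum_comm4 {n : ℕ} (f : Fin n → Fin n → Fin n → Fin n → ℝ) :
    ∑ p, ∑ r, ∑ i, ∑ k, f p r i k = ∑ i, ∑ k, ∑ p, ∑ r, f p r i k :=
  calc ∑ p, ∑ r, ∑ i, ∑ k, f p r i k
      = ∑ p, ∑ i, ∑ r, ∑ k, f p r i k :=
        Finset.sum_congr rfl fun _ _ => Finset.sum_comm
    _ = ∑ i, ∑ p, ∑ r, ∑ k, f p r i k := Finset.sum_comm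
    _ = ∑ i, ∑ p, ∑ k, ∑ r, f p r i k :=
        Finset.sum_congr rfl fun _ _ => Finset.sum_congr rfl fun _ _ => Finset.sum_comm
    _ = ∑ i, ∑ k, ∑ p, ∑ r, f p r i k :=
        Finset.sum_congr rfl fun _ _ => Finset.sum_comm

lemma key_algebra {n : ℕ} {M N : Matrix (Fin n) (Fin n) ℝ} (hNM : N * M = 1)
    (P : Fin n → Fin n → ℝ) (T S C Mj u θ : Fin n → ℝ)
    (hu : ∀ p, u p = ∑ m, M p m * T m) (hθ : ∀ r, θ r = ∑ m, M r m * S m) :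
    ∑ i, ((∑ k, S k * P k i) * T i + Mj i * C i)
    = ∑ i, ((∑ k, T k * P k i) * S i + Mj i * C i)
      + ∑ p, ∑ r, (∑ i, ∑ k, (P k i - P i k) * N i p * N k r) * u p * θ r := by
  have inv : ∀ (v : Fin n → ℝ) i, ∑ p, N i p * (∑ m, M p m * v m) = v i := by
    intro v i
    calc ∑ p, N i p * ∑ m, M p m * v m
        = ∑ p, ∑ m, N i p * M p m * v m :=
          Finset.sum_congr rfl fun p _ => by
            rw [Finset.mul_sum]; exact Finset.sum_congr rfl fun m _ => by ring
      _ = ∑ m, ∑ p, N i p * M p m * v m := Finset.sum_comm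
      _ = ∑ m, (N * M) i m * v m :=
          Finset.sum_congr rfl fun m _ => by rw [Matrix.mul_apply, Finset.sum_mul]
      _ = v i := by rw [hNM]; simp [Matrix.one_apply]
  have hT : ∀ i, ∑ p, N i p * u p = T i := by
    intro i
    have h : ∑ p, N i p * u p = ∑ p, N i p * (∑ m, M p m * T m) :=
      Finset.sum_congr rfl fun p _ => by rw [hu]
    rw [h]; exact inv T i
  have hS : ∀ k, ∑ r, N k r * θ r = S k := by
    intro k
    have h : ∑ r, N k r * θ r = ∑ r, N k r * (∑ m, M r m * S m) :=
      Finset.sum_congr rfl fun r _ => by rw [hθ]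
    rw [h]; exact inv S k
  have hH : ∑ p, ∑ r, (∑ i, ∑ k, (P k i - P i k) * N i p * N k r) * u p * θ r
      = ∑ i, ∑ k, (P k i - P i k) * T i * S k := by
    have step1 : ∀ p r, (∑ i, ∑ k, (P k i - P i k) * N i p * N k r) * u p * θ r
        = ∑ i, ∑ k, ((P k i - P i k) * (N i p * u p)) * (N k r * θ r) := by
      intro p r
      rw [Finset.sum_mul, Finset.sum_mul]
      refine Finset.sum_congr rfl fun i _ => ?_
      rw [Finset.sum_mul, Finset.sum_mul]
      exact Finset.sum_congr rfl fun k _ => by ring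
    calc ∑ p, ∑ r, (∑ i, ∑ k, (P k i - P i k) * N i p * N k r) * u p * θ r
        = ∑ p, ∑ r, ∑ i, ∑ k, ((P k i - P i k) * (N i p * u p)) * (N k r * θ r) :=
          Finset.sum_congr rfl fun p _ => Finset.sum_congr rfl fun r _ => step1 p r
      _ = ∑ i, ∑ k, ∑ p, ∑ r, ((P k i - P i k) * (N i p * u p)) * (N k r * θ r) := sum_comm4 _
      _ = ∑ i, ∑ k, (P k i - P i k) * T i * S k := by
          refine Finset.sum_congr rfl fun i _ => Finset.sum_congr rfl fun k _ => ?_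
          rw [← Finset.sum_mul_sum, ← Finset.mul_sum, hT i, hS k]
  rw [hH]
  have e1 : ∑ i, ((∑ k, S k * P k i) * T i + Mj i * C i)
      = (∑ i, ∑ k, S k * P k i * T i) + ∑ i, Mj i * C i := by
    rw [← Finset.sum_add_distrib]
    exact Finset.sum_congr rfl fun i _ => by rw [Finset.sum_mul]
  have e2 : ∑ i, ((∑ k, T k * P k i) * S i + Mj i * C i)
      = (∑ i, ∑ k, P i k * T i * S k) + ∑ i, Mj i * C i :=
    calc ∑ i, ((∑ k, T k * P k i) * S i + Mj i * C i)
        = (∑ i, (∑ k, T k * P k i) * S i) + ∑ i, Mj i * C i := Finset.sum_add_distrib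
      _ = (∑ i, ∑ k, T k * P k i * S i) + ∑ i, Mj i * C i := by
          congr 1; exact Finset.sum_congr rfl fun i _ => Finset.sum_mul _ _ _
      _ = (∑ k, ∑ i, T k * P k i * S i) + ∑ i, Mj i * C i := by rw [Finset.sum_comm]
      _ = (∑ i, ∑ k, P i k * T i * S k) + ∑ i, Mj i * C i := by
          congr 1
          exact Finset.sum_congr rfl fun i _ => Finset.sum_congr rfl fun k _ => by ring
  rw [e1, e2]
  have efin : (∑ i, ∑ k, P i k * T i * S k) + (∑ i, ∑ k, (P k i - P i k) * T i * S k)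
      = ∑ i, ∑ k, S k * P k i * T i := by
    rw [← Finset.sum_add_distrib]
    refine Finset.sum_congr rfl fun i _ => ?_
    rw [← Finset.sum_add_distrib]
    exact Finset.sum_congr rfl fun k _ => by ring
  linarith [efin]

lemma clm_sum {n : ℕ} (L : (Fin n → ℝ) →L[ℝ] ℝ) (v : Fin n → ℝ) :
    L v = ∑ k, v k * L (Pi.single k 1) := by
  have hv : v = ∑ k, v k • (Pi.single k 1 : Fin n → ℝ) := by
    funext m
    simp [Finset.sum_apply, Pi.single_apply]
  conv_lhs => rw [hv]
  rw [map_sum]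
  simp [smul_eq_mul]

/-- **Corollary to the First Transpositional Relation.**
For a C² variation (mixed second partials commute), `δ u^j = d(δθ^j) + γ^j_{ab} u^a δθ^b`. -/
theorem variation_of_quasi_velocities {n : ℕ}
    (Ψ Φ : (Fin n → ℝ) → Matrix (Fin n) (Fin n) ℝ)
    (hΨ : ∀ i j : Fin n, ContDiff ℝ (⊤ : ℕ∞) (fun x => Ψ x i j))
    (hΦ : ∀ x, Ψ x * Φ x = 1 ∧ Φ x * Ψ x = 1)
    (ε a b : ℝ) (hε : 0 < ε) (hab : a < b)
    (q : ℝ → ℝ → Fin n → ℝ)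
    (hq : ContDiff ℝ 2 (fun p : ℝ × ℝ => q p.1 p.2)) :
    ∀ s ∈ Set.Icc (-ε) ε, ∀ t ∈ Set.Icc a b, ∀ j : Fin n,
      deriv (fun s' => qvel Ψ q s' t j) s
      = deriv (fun t' => qvar Ψ q s t' j) t
        + ∑ p, ∑ r, hamel Ψ Φ (q s t) j p r * qvel Ψ q s t p * qvar Ψ q s t r := by
  intro s _hs t _ht j
  let F : ℝ × ℝ → (Fin n → ℝ) := fun p => q p.1 p.2
  have hF2 : ContDiff ℝ 2 F := hq
  have hFdiff : Differentiable ℝ F := hF2.differentiable (by norm_num)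
  have hf' : ContDiff ℝ 1 (fderiv ℝ F) := hF2.fderiv_right (by norm_num)
  have hf'diff : Differentiable ℝ (fderiv ℝ F) := hf'.differentiable (by norm_num)
  have hcs : HasDerivAt (fun s' : ℝ => ((s', t) : ℝ × ℝ)) (1, 0) s :=
    (hasDerivAt_id s).prodMk (hasDerivAt_const s t)
  have hct : HasDerivAt (fun t' : ℝ => ((s, t') : ℝ × ℝ)) (0, 1) t :=
    (hasDerivAt_const t s).prodMk (hasDerivAt_id t)
  -- partial derivatives as directional fderivs
  have hA : ∀ (s' t' : ℝ) (i : Fin n),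
      deriv (fun τ => q s' τ i) t' = fderiv ℝ F (s', t') (0, 1) i := by
    intro s' t' i
    have h1 : HasDerivAt (fun τ : ℝ => F (s', τ)) (fderiv ℝ F (s', t') (0, 1)) t' :=
      (hFdiff (s', t')).hasFDerivAt.comp_hasDerivAt t'
        ((hasDerivAt_const t' s').prodMk (hasDerivAt_id t'))
    exact (hasDerivAt_pi.1 h1 i).deriv
  have hB : ∀ (s' t' : ℝ) (i : Fin n),
      deriv (fun σ => q σ t' i) s' = fderiv ℝ F (s', t') (1, 0) i := by
    intro s' t' i
    have h1 : HasDerivAt (fun σ : ℝ => F (σ, t')) (fderiv ℝ F (s', t') (1, 0)) s' :=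
      (hFdiff (s', t')).hasFDerivAt.comp_hasDerivAt (l := F) s'
        ((hasDerivAt_id s').prodMk (hasDerivAt_const s' t'))
    exact (hasDerivAt_pi.1 h1 i).deriv
  -- second derivatives
  have hDts : HasDerivAt (fun s' : ℝ => fderiv ℝ F (s', t) ((0:ℝ), (1:ℝ)))
      (fderiv ℝ (fderiv ℝ F) (s, t) (1, 0) (0, 1)) s := by
    have h2 : HasFDerivAt (fun p : ℝ × ℝ => fderiv ℝ F p ((0:ℝ), (1:ℝ)))
        ((ContinuousLinearMap.apply ℝ (Fin n → ℝ) (((0:ℝ), (1:ℝ)) : ℝ × ℝ)).comp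
          (fderiv ℝ (fderiv ℝ F) (s, t))) (s, t) :=
      (ContinuousLinearMap.apply ℝ (Fin n → ℝ) (((0:ℝ), (1:ℝ)) : ℝ × ℝ)).hasFDerivAt.comp
        (s, t) (hf'diff (s, t)).hasFDerivAt
    exact h2.comp_hasDerivAt s hcs
  have hDst : HasDerivAt (fun t' : ℝ => fderiv ℝ F (s, t') ((1:ℝ), (0:ℝ)))
      (fderiv ℝ (fderiv ℝ F) (s, t) (0, 1) (1, 0)) t := by
    have h2 : HasFDerivAt (fun p : ℝ × ℝ => fderiv ℝ F p ((1:ℝ), (0:ℝ)))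
        ((ContinuousLinearMap.apply ℝ (Fin n → ℝ) (((1:ℝ), (0:ℝ)) : ℝ × ℝ)).comp
          (fderiv ℝ (fderiv ℝ F) (s, t))) (s, t) :=
      (ContinuousLinearMap.apply ℝ (Fin n → ℝ) (((1:ℝ), (0:ℝ)) : ℝ × ℝ)).hasFDerivAt.comp
        (s, t) (hf'diff (s, t)).hasFDerivAt
    exact h2.comp_hasDerivAt t hct
  have hsymm : fderiv ℝ (fderiv ℝ F) (s, t) ((0:ℝ), (1:ℝ)) ((1:ℝ), (0:ℝ))
      = fderiv ℝ (fderiv ℝ F) (s, t) (1, 0) (0, 1) :=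
    second_derivative_symmetric (fun y => (hFdiff y).hasFDerivAt)
      (hf'diff (s, t)).hasFDerivAt _ _
  -- derivatives of Ψ components along the curves
  have hFs : HasDerivAt (fun s' : ℝ => F (s', t)) (fderiv ℝ F (s, t) (1, 0)) s :=
    (hFdiff (s, t)).hasFDerivAt.comp_hasDerivAt (l := F) s hcs
  have hFt : HasDerivAt (fun t' : ℝ => F (s, t')) (fderiv ℝ F (s, t) (0, 1)) t :=
    (hFdiff (s, t)).hasFDerivAt.comp_hasDerivAt t hct
  have hψs : ∀ a' b' : Fin n, HasDerivAt (fun s' => Ψ (q s' t) a' b')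
      (fderiv ℝ (fun z => Ψ z a' b') (q s t) (fderiv ℝ F (s, t) (1, 0))) s := fun a' b' =>
    (((hΨ a' b').differentiable (by simp) (q s t)).hasFDerivAt).comp_hasDerivAt (l := fun z => Ψ z a' b') s hFs
  have hψt : ∀ a' b' : Fin n, HasDerivAt (fun t' => Ψ (q s t') a' b')
      (fderiv ℝ (fun z => Ψ z a' b') (q s t) (fderiv ℝ F (s, t) (0, 1))) t := fun a' b' =>
    (((hΨ a' b').differentiable (by simp) (q s t)).hasFDerivAt).comp_hasDerivAt (l := fun z => Ψ z a' b') t hFt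
  -- expansion of the fderiv of Ψ components
  have hfdS : ∀ i : Fin n, fderiv ℝ (fun z => Ψ z j i) (q s t) (fderiv ℝ F (s, t) (1, 0))
      = ∑ k, fderiv ℝ F (s, t) (1, 0) k * pder (fun y => Ψ y j i) (q s t) k := fun i =>
    clm_sum _ _
  have hfdT : ∀ i : Fin n, fderiv ℝ (fun z => Ψ z j i) (q s t) (fderiv ℝ F (s, t) (0, 1))
      = ∑ k, fderiv ℝ F (s, t) (0, 1) k * pder (fun y => Ψ y j i) (q s t) k := fun i =>
    clm_sum _ _
  -- LHS derivative
  have hqvel_eq : (fun s' => qvel Ψ q s' t j)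
      = fun s' => ∑ i, Ψ (q s' t) j i * fderiv ℝ F (s', t) (0, 1) i := by
    funext s'
    show (∑ i, Ψ (q s' t) j i * deriv (fun t' => q s' t' i) t) = _
    exact Finset.sum_congr rfl fun i _ => by rw [hA s' t i]
  have hL0 : HasDerivAt (fun s' => ∑ i, Ψ (q s' t) j i * fderiv ℝ F (s', t) (0, 1) i)
      (∑ i, (fderiv ℝ (fun z => Ψ z j i) (q s t) (fderiv ℝ F (s, t) (1, 0))
          * fderiv ℝ F (s, t) (0, 1) i
        + Ψ (q s t) j i * fderiv ℝ (fderiv ℝ F) (s, t) (1, 0) (0, 1) i)) s :=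
    HasDerivAt.fun_sum fun i _ => (hψs j i).mul (hasDerivAt_pi.1 hDts i)
  have hLval : (∑ i, (fderiv ℝ (fun z => Ψ z j i) (q s t) (fderiv ℝ F (s, t) (1, 0))
          * fderiv ℝ F (s, t) (0, 1) i
        + Ψ (q s t) j i * fderiv ℝ (fderiv ℝ F) (s, t) (1, 0) (0, 1) i))
      = ∑ i, ((∑ k, fderiv ℝ F (s, t) (1, 0) k * pder (fun y => Ψ y j i) (q s t) k)
            * fderiv ℝ F (s, t) (0, 1) i
          + Ψ (q s t) j i * fderiv ℝ (fderiv ℝ F) (s, t) (1, 0) (0, 1) i) :=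
    Finset.sum_congr rfl fun i _ => by rw [hfdS i]
  have hL : HasDerivAt (fun s' => qvel Ψ q s' t j)
      (∑ i, ((∑ k, fderiv ℝ F (s, t) (1, 0) k * pder (fun y => Ψ y j i) (q s t) k)
            * fderiv ℝ F (s, t) (0, 1) i
          + Ψ (q s t) j i * fderiv ℝ (fderiv ℝ F) (s, t) (1, 0) (0, 1) i)) s := by
    rw [hqvel_eq]; exact hLval ▸ hL0
  -- RHS derivative
  have hqvar_eq : (fun t' => qvar Ψ q s t' j)
      = fun t' => ∑ i, Ψ (q s t') j i * fderiv ℝ F (s, t') (1, 0) i := by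
    funext t'
    show (∑ i, Ψ (q s t') j i * deriv (fun s' => q s' t' i) s) = _
    exact Finset.sum_congr rfl fun i _ => by rw [hB s t' i]
  have hR0 : HasDerivAt (fun t' => ∑ i, Ψ (q s t') j i * fderiv ℝ F (s, t') (1, 0) i)
      (∑ i, (fderiv ℝ (fun z => Ψ z j i) (q s t) (fderiv ℝ F (s, t) (0, 1))
          * fderiv ℝ F (s, t) (1, 0) i
        + Ψ (q s t) j i * fderiv ℝ (fderiv ℝ F) (s, t) (0, 1) (1, 0) i)) t :=
    HasDerivAt.fun_sum fun i _ => (hψt j i).mul (hasDerivAt_pi.1 hDst i)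
  have hRval : (∑ i, (fderiv ℝ (fun z => Ψ z j i) (q s t) (fderiv ℝ F (s, t) (0, 1))
          * fderiv ℝ F (s, t) (1, 0) i
        + Ψ (q s t) j i * fderiv ℝ (fderiv ℝ F) (s, t) (0, 1) (1, 0) i))
      = ∑ i, ((∑ k, fderiv ℝ F (s, t) (0, 1) k * pder (fun y => Ψ y j i) (q s t) k)
            * fderiv ℝ F (s, t) (1, 0) i
          + Ψ (q s t) j i * fderiv ℝ (fderiv ℝ F) (s, t) (1, 0) (0, 1) i) :=
    Finset.sum_congr rfl fun i _ => by rw [hfdT i, hsymm]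
  have hR : HasDerivAt (fun t' => qvar Ψ q s t' j)
      (∑ i, ((∑ k, fderiv ℝ F (s, t) (0, 1) k * pder (fun y => Ψ y j i) (q s t) k)
            * fderiv ℝ F (s, t) (1, 0) i
          + Ψ (q s t) j i * fderiv ℝ (fderiv ℝ F) (s, t) (1, 0) (0, 1) i)) t := by
    rw [hqvar_eq]; exact hRval ▸ hR0
  rw [hL.deriv, hR.deriv]
  have hu : ∀ p, qvel Ψ q s t p = ∑ m, Ψ (q s t) p m * fderiv ℝ F (s, t) (0, 1) m := by
    intro p
    show (∑ m, Ψ (q s t) p m * deriv (fun t' => q s t' m) t) = _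
    exact Finset.sum_congr rfl fun m _ => by rw [hA s t m]
  have hθ : ∀ r, qvar Ψ q s t r = ∑ m, Ψ (q s t) r m * fderiv ℝ F (s, t) (1, 0) m := by
    intro r
    show (∑ m, Ψ (q s t) r m * deriv (fun s' => q s' t m) s) = _
    exact Finset.sum_congr rfl fun m _ => by rw [hB s t m]
  exact key_algebra (hΦ (q s t)).2 (fun k i => pder (fun y => Ψ y j i) (q s t) k)
    (fun i => fderiv ℝ F (s, t) (0, 1) i) (fun i => fderiv ℝ F (s, t) (1, 0) i)
    (fun i => fderiv ℝ (fderiv ℝ F) (s, t) (1, 0) (0, 1) i) (fun i => Ψ (q s t) j i)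
    (qvel Ψ q s t) (qvar Ψ q s t) hu hθ

end
end

section
/- Boltzmann–Hamel equations imply the Lagrange–D'Alembert principle: Let L : ℝⁿ × ℝⁿ → ℝ be C², ℒ(q,u) = L(q, Φ(q)u), and F_i : ℝⁿ × ℝⁿ → ℝ continuous applied force components with Q_i = Φ^j_i F_j. Suppose a C² curve γ : [a,b] → ℝⁿ satisfies the constraints u^σ = 0 for all σ ∈ {1,…,m} and the Boltzmann–Hamel equations d/dt(∂ℒ/∂u^I) − (∂ℒ/∂q^j)Φ^j_I − (∂ℒ/∂u^j) γ^j_{KI} u^K = Q_I for all I ∈ {m+1,…,n} (with K summed over m+1,…,n and j over 1,…,n, all quantities evaluated along γ with u^σ = 0). Then for every proper C² variation q(s,t) of γ satisfying the virtual-work condition δθ^σ ≡ 0 for σ ∈ {1,…,m}, the first variation vanishes: d/ds|_{s=0} ∫_a^b L(q(s,t), ∂q/∂t(s,t)) dt + ∫_a^b F_i δq^i dt = 0. -/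
open Matrix Real Finset

noncomputable section

/-- Quasi-velocities `u^j(t) = Ψ^j_i(γ(t)) γ̇^i(t)` of a curve `γ`. -/
def cvel {n : ℕ} (Ψ : (Fin n → ℝ) → Matrix (Fin n) (Fin n) ℝ)
    (γ : ℝ → Fin n → ℝ) (t : ℝ) : Fin n → ℝ :=
  fun j => ∑ i, Ψ (γ t) j i * deriv (fun t' => γ t' i) t

/-- The Lagrangian expressed in quasi-velocities: `ℒ(x,u) = L(x, Φ(x)u)`. -/
def scriptL {n : ℕ} (L : (Fin n → ℝ) → (Fin n → ℝ) → ℝ)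
    (Φ : (Fin n → ℝ) → Matrix (Fin n) (Fin n) ℝ)
    (x u : Fin n → ℝ) : ℝ :=
  L x (Φ x *ᵥ u)

/-! ### Auxiliary toolkit -/

section Toolkit
variable {n : ℕ}

lemma clm_pi_apply (ℓ : (Fin n → ℝ) →L[ℝ] ℝ) (w : Fin n → ℝ) :
    ℓ w = ∑ i, w i * ℓ (Pi.single i 1) := by
  have h : w = ∑ i, w i • (Pi.single i 1 : Fin n → ℝ) := by
    funext j
    simp [Finset.sum_apply, Pi.single_apply]
  nth_rewrite 1 [h]
  rw [map_sum]
  simp [smul_eq_mul]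

lemma fderiv_pi_apply {f : (Fin n → ℝ) → ℝ} {x : Fin n → ℝ} (w : Fin n → ℝ) :
    fderiv ℝ f x w = ∑ i, w i * pder f x i := by
  simpa [pder] using clm_pi_apply (fderiv ℝ f x) w

lemma clm_snd_apply (ℓ : ((Fin n → ℝ) × (Fin n → ℝ)) →L[ℝ] ℝ) (z : Fin n → ℝ) :
    ℓ (0, z) = ∑ i, z i * ℓ (0, Pi.single i 1) := by
  have h := clm_pi_apply (ℓ.comp (ContinuousLinearMap.inr ℝ (Fin n → ℝ) (Fin n → ℝ))) z
  simpa using h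

lemma clm_fst_apply (ℓ : ((Fin n → ℝ) × (Fin n → ℝ)) →L[ℝ] ℝ) (w : Fin n → ℝ) :
    ℓ (w, 0) = ∑ i, w i * ℓ (Pi.single i 1, 0) := by
  have h := clm_pi_apply (ℓ.comp (ContinuousLinearMap.inl ℝ (Fin n → ℝ) (Fin n → ℝ))) w
  simpa using h

lemma clm_split (ℓ : ((Fin n → ℝ) × (Fin n → ℝ)) →L[ℝ] ℝ) (w z : Fin n → ℝ) :
    ℓ (w, z) = ℓ (w, 0) + ℓ (0, z) := by
  rw [← map_add]; simp

lemma hasDerivAt_comp_curve {f : (Fin n → ℝ) → ℝ} {c : ℝ → Fin n → ℝ} {t : ℝ} {v : Fin n → ℝ}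
    (hf : DifferentiableAt ℝ f (c t)) (hc : HasDerivAt c v t) :
    HasDerivAt (fun t' => f (c t')) (∑ i, v i * pder f (c t) i) t := by
  have h := hf.hasFDerivAt.comp_hasDerivAt t hc
  rwa [fderiv_pi_apply v] at h

lemma hasDerivAt_slice_right {E : Type*} [NormedAddCommGroup E] [NormedSpace ℝ E]
    {g : ℝ × ℝ → E} {p : ℝ × ℝ} (hg : DifferentiableAt ℝ g p) :
    HasDerivAt (fun t => g (p.1, t)) (fderiv ℝ g p (0, 1)) p.2 := by
  have h1 : HasDerivAt (fun t : ℝ => ((p.1, t) : ℝ × ℝ)) ((0 : ℝ), (1 : ℝ)) p.2 :=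
    (hasDerivAt_const _ _).prodMk (hasDerivAt_id _)
  have := hg.hasFDerivAt.comp_hasDerivAt p.2 (by simpa using h1)
  simpa [Function.comp_def] using this

lemma hasDerivAt_slice_left {E : Type*} [NormedAddCommGroup E] [NormedSpace ℝ E]
    {g : ℝ × ℝ → E} {p : ℝ × ℝ} (hg : DifferentiableAt ℝ g p) :
    HasDerivAt (fun s => g (s, p.2)) (fderiv ℝ g p (1, 0)) p.1 := by
  have h1 : HasDerivAt (fun s : ℝ => ((s, p.2) : ℝ × ℝ)) ((1 : ℝ), (0 : ℝ)) p.1 :=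
    (hasDerivAt_id _).prodMk (hasDerivAt_const _ _)
  have := hg.hasFDerivAt.comp_hasDerivAt p.1 (by simpa using h1)
  simpa [Function.comp_def] using this

lemma pder_sum {ι : Type*} (s : Finset ι) (f : ι → (Fin n → ℝ) → ℝ) {x : Fin n → ℝ}
    (hf : ∀ i ∈ s, DifferentiableAt ℝ (f i) x) (j : Fin n) :
    pder (fun y => ∑ i ∈ s, f i y) x j = ∑ i ∈ s, pder (f i) x j := by
  unfold pder
  rw [fderiv_fun_sum hf]
  simp

lemma pder_mul {f g : (Fin n → ℝ) → ℝ} {x : Fin n → ℝ}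
    (hf : DifferentiableAt ℝ f x) (hg : DifferentiableAt ℝ g x) (j : Fin n) :
    pder (fun y => f y * g y) x j = f x * pder g x j + g x * pder f x j := by
  unfold pder
  rw [fderiv_fun_mul hf hg]
  simp [smul_eq_mul]

lemma pder_mul_const {f : (Fin n → ℝ) → ℝ} {x : Fin n → ℝ}
    (hf : DifferentiableAt ℝ f x) (c : ℝ) (j : Fin n) :
    pder (fun y => f y * c) x j = pder f x j * c := by
  unfold pder
  rw [fderiv_mul_const hf]
  simp [mul_comm]

lemma sum3_rot (f : Fin n → Fin n → Fin n → ℝ) :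
    ∑ s, ∑ a, ∑ b, f s a b = ∑ b, ∑ s, ∑ a, f s a b := by
  calc ∑ s, ∑ a, ∑ b, f s a b
      = ∑ s, ∑ b, ∑ a, f s a b := Finset.sum_congr rfl fun s _ => Finset.sum_comm
    _ = ∑ b, ∑ s, ∑ a, f s a b := Finset.sum_comm

end Toolkit
section Smooth
variable {n : ℕ}

lemma contDiff_finset_prod {ι : Type*} (s : Finset ι) (f : ι → (Fin n → ℝ) → ℝ)
    (h : ∀ i ∈ s, ContDiff ℝ (⊤ : ℕ∞) (f i)) :
    ContDiff ℝ (⊤ : ℕ∞) (fun x => ∏ i ∈ s, f i x) := by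
  classical
  induction s using Finset.induction with
  | empty => simpa using contDiff_const
  | @insert a s ha ih =>
      simp only [Finset.prod_insert ha]
      exact (h a (Finset.mem_insert_self a s)).mul
        (ih fun i hi => h i (Finset.mem_insert_of_mem hi))

lemma contDiff_matrix_det {k : ℕ} (M : (Fin n → ℝ) → Matrix (Fin k) (Fin k) ℝ)
    (hM : ∀ i j, ContDiff ℝ (⊤ : ℕ∞) (fun x => M x i j)) :
    ContDiff ℝ (⊤ : ℕ∞) (fun x => (M x).det) := by
  simp only [Matrix.det_apply']
  apply ContDiff.sum
  intro σ _
  exact ContDiff.mul contDiff_const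
    (contDiff_finset_prod _ _ (fun i _ => hM (σ i) i))

lemma contDiff_Phi {Ψ Φ : (Fin n → ℝ) → Matrix (Fin n) (Fin n) ℝ}
    (hΨ : ∀ i j : Fin n, ContDiff ℝ (⊤ : ℕ∞) (fun x => Ψ x i j))
    (hΦ : ∀ x, Ψ x * Φ x = 1 ∧ Φ x * Ψ x = 1) :
    ∀ i j : Fin n, ContDiff ℝ (⊤ : ℕ∞) (fun x => Φ x i j) := by
  intro i j
  have hunit : ∀ x, IsUnit (Ψ x) := fun x =>
    ⟨⟨Ψ x, Φ x, (hΦ x).1, (hΦ x).2⟩, rfl⟩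
  have hdet : ∀ x, (Ψ x).det ≠ 0 := by
    intro x
    have := (Matrix.isUnit_iff_isUnit_det (Ψ x)).mp (hunit x)
    exact this.ne_zero
  have hPhi_eq : ∀ x, Φ x i j = ((Ψ x).det)⁻¹ * (Ψ x).adjugate i j := by
    intro x
    have h1 : Φ x = (Ψ x)⁻¹ := (Matrix.inv_eq_right_inv (hΦ x).1).symm
    rw [h1, Matrix.inv_def, Matrix.smul_apply, Ring.inverse_eq_inv', smul_eq_mul]
  have hdetC : ContDiff ℝ (⊤ : ℕ∞) (fun x => (Ψ x).det) := contDiff_matrix_det Ψ hΨ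
  have hadjC : ContDiff ℝ (⊤ : ℕ∞) (fun x => (Ψ x).adjugate i j) := by
    simp only [Matrix.adjugate_apply]
    apply contDiff_matrix_det
    intro a b
    rcases eq_or_ne a j with h | h
    · simpa [Matrix.updateRow_apply, h] using (contDiff_const :
        ContDiff ℝ (⊤ : ℕ∞) (fun _ : Fin n → ℝ => (Pi.single i 1 : Fin n → ℝ) b))
    · simpa [Matrix.updateRow_apply, h] using hΨ a b
  have : ContDiff ℝ (⊤ : ℕ∞) (fun x => ((Ψ x).det)⁻¹ * (Ψ x).adjugate i j) :=
    (hdetC.inv hdet).mul hadjC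
  have heq : (fun x => Φ x i j) = (fun x => ((Ψ x).det)⁻¹ * (Ψ x).adjugate i j) :=
    funext hPhi_eq
  rw [heq]
  exact this
end Smooth
section SL
variable {n : ℕ} {L : (Fin n → ℝ) → (Fin n → ℝ) → ℝ}
  {Φ : (Fin n → ℝ) → Matrix (Fin n) (Fin n) ℝ}

/-- HasFDerivAt for `v ↦ L x (Φx *ᵥ v)` -/
lemma hasFDerivAt_scriptL_u
    (hL : ContDiff ℝ 2 (fun p : (Fin n → ℝ) × (Fin n → ℝ) => L p.1 p.2))
    (x w : Fin n → ℝ) :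
    HasFDerivAt (scriptL L Φ x)
      ((fderiv ℝ (fun p : (Fin n → ℝ) × (Fin n → ℝ) => L p.1 p.2) (x, Φ x *ᵥ w)).comp
        ((ContinuousLinearMap.inr ℝ (Fin n → ℝ) (Fin n → ℝ)).comp
          (LinearMap.toContinuousLinearMap (Matrix.mulVecLin (Φ x))))) w := by
  have hmv : HasFDerivAt (fun v => Φ x *ᵥ v)
      (LinearMap.toContinuousLinearMap (Matrix.mulVecLin (Φ x))) w := by
    have := (LinearMap.toContinuousLinearMap (Matrix.mulVecLin (Φ x))).hasFDerivAt (x := w)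
    exact this
  have hincl : HasFDerivAt (fun v => ((x, Φ x *ᵥ v) : (Fin n → ℝ) × (Fin n → ℝ)))
      ((ContinuousLinearMap.inr ℝ (Fin n → ℝ) (Fin n → ℝ)).comp
        (LinearMap.toContinuousLinearMap (Matrix.mulVecLin (Φ x)))) w := by
    have := (hasFDerivAt_const x w).prodMk hmv
    exact this
  have hLd : DifferentiableAt ℝ (fun p : (Fin n → ℝ) × (Fin n → ℝ) => L p.1 p.2)
      (x, Φ x *ᵥ w) := (hL.differentiable (by simp)).differentiableAt
  exact hLd.hasFDerivAt.comp w hincl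

lemma pder_scriptL_u
    (hL : ContDiff ℝ 2 (fun p : (Fin n → ℝ) × (Fin n → ℝ) => L p.1 p.2))
    (x w : Fin n → ℝ) (I : Fin n) :
    pder (scriptL L Φ x) w I
      = ∑ i, Φ x i I *
          fderiv ℝ (fun p : (Fin n → ℝ) × (Fin n → ℝ) => L p.1 p.2)
            (x, Φ x *ᵥ w) (0, Pi.single i 1) := by
  have h := (hasFDerivAt_scriptL_u (Φ := Φ) hL x w).fderiv
  unfold pder
  rw [h]
  simp only [ContinuousLinearMap.comp_apply, ContinuousLinearMap.inr_apply,
    LinearMap.coe_toContinuousLinearMap', Matrix.mulVecLin_apply]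
  rw [show Φ x *ᵥ Pi.single I 1 = fun i => Φ x i I * 1 from by ext; simp]
  have := clm_snd_apply
    (fderiv ℝ (fun p : (Fin n → ℝ) × (Fin n → ℝ) => L p.1 p.2) (x, Φ x *ᵥ w))
    (fun i => Φ x i I * 1)
  rw [this]
  simp [mul_comm]

/-- HasFDerivAt for `y ↦ Φ y *ᵥ w` -/
lemma hasFDerivAt_mulVec_const
    (hΦsm : ∀ i j : Fin n, ContDiff ℝ (⊤ : ℕ∞) (fun x => Φ x i j))
    (x w : Fin n → ℝ) :
    HasFDerivAt (fun y => Φ y *ᵥ w)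
      (ContinuousLinearMap.pi (fun i => fderiv ℝ (fun y => ∑ k, Φ y i k * w k) x)) x := by
  have : ∀ i : Fin n, HasFDerivAt (fun y => ∑ k, Φ y i k * w k)
      (fderiv ℝ (fun y => ∑ k, Φ y i k * w k) x) x := by
    intro i
    apply DifferentiableAt.hasFDerivAt
    exact DifferentiableAt.fun_sum fun k _ =>
      (((hΦsm i k).differentiable (by simp)).differentiableAt).mul_const (w k)
  have h := hasFDerivAt_pi (𝕜 := ℝ)
    (φ := fun i => fun y => ∑ k, Φ y i k * w k)
    (φ' := fun i => fderiv ℝ (fun y => ∑ k, Φ y i k * w k) x) (x := x)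
  exact h.2 this

lemma pder_scriptL_x
    (hL : ContDiff ℝ 2 (fun p : (Fin n → ℝ) × (Fin n → ℝ) => L p.1 p.2))
    (hΦsm : ∀ i j : Fin n, ContDiff ℝ (⊤ : ℕ∞) (fun x => Φ x i j))
    (x w : Fin n → ℝ) (j : Fin n) :
    pder (fun y => scriptL L Φ y w) x j
      = fderiv ℝ (fun p : (Fin n → ℝ) × (Fin n → ℝ) => L p.1 p.2)
          (x, Φ x *ᵥ w) (Pi.single j 1, 0)
        + ∑ i, (∑ k, pder (fun y => Φ y i k) x j * w k) *
            fderiv ℝ (fun p : (Fin n → ℝ) × (Fin n → ℝ) => L p.1 p.2)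
              (x, Φ x *ᵥ w) (0, Pi.single i 1) := by
  have hmv := hasFDerivAt_mulVec_const hΦsm x w
  have hH : HasFDerivAt (fun y => ((y, Φ y *ᵥ w) : (Fin n → ℝ) × (Fin n → ℝ)))
      ((ContinuousLinearMap.id ℝ (Fin n → ℝ)).prod
        (ContinuousLinearMap.pi (fun i => fderiv ℝ (fun y => ∑ k, Φ y i k * w k) x))) x :=
    (hasFDerivAt_id x).prodMk hmv
  have hLd : DifferentiableAt ℝ (fun p : (Fin n → ℝ) × (Fin n → ℝ) => L p.1 p.2)
      (x, Φ x *ᵥ w) := (hL.differentiable (by simp)).differentiableAt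
  have hcomp := hLd.hasFDerivAt.comp x hH
  have hfd := hcomp.fderiv
  unfold pder
  rw [show (fun y => scriptL L Φ y w)
      = ((fun p : (Fin n → ℝ) × (Fin n → ℝ) => L p.1 p.2) ∘
          (fun y => ((y, Φ y *ᵥ w) : (Fin n → ℝ) × (Fin n → ℝ)))) from rfl]
  rw [hfd]
  simp only [ContinuousLinearMap.comp_apply, ContinuousLinearMap.prod_apply,
    ContinuousLinearMap.coe_id', id_eq, ContinuousLinearMap.pi_apply]
  rw [clm_split]
  congr 1
  rw [clm_snd_apply]
  congr 1
  funext i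
  congr 1
  rw [ContinuousLinearMap.pi_apply]
  rw [show (fderiv ℝ (fun y => ∑ k, Φ y i k * w k) x) (Pi.single j 1)
      = pder (fun y => ∑ k, Φ y i k * w k) x j from rfl]
  rw [pder_sum _ _
    (fun k _ => (((hΦsm i k).differentiable (by simp)).differentiableAt).mul_const (w k))]
  refine Finset.sum_congr rfl fun k _ => ?_
  rw [pder_mul_const (((hΦsm i k).differentiable (by simp)).differentiableAt) (w k) j]
  rfl
end SL

section Alg
variable {n : ℕ} {Ψ Φ : (Fin n → ℝ) → Matrix (Fin n) (Fin n) ℝ}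

/-- differentiating `Φ Ψ = 1` entrywise -/
lemma pder_inv_rel
    (hΨ : ∀ i j : Fin n, ContDiff ℝ (⊤ : ℕ∞) (fun x => Ψ x i j))
    (hΦsm : ∀ i j : Fin n, ContDiff ℝ (⊤ : ℕ∞) (fun x => Φ x i j))
    (hΦ : ∀ x, Ψ x * Φ x = 1 ∧ Φ x * Ψ x = 1)
    (x : Fin n → ℝ) (i a j : Fin n) :
    ∑ s, (Φ x i s * pder (fun y => Ψ y s a) x j
          + Ψ x s a * pder (fun y => Φ y i s) x j) = 0 := by
  have hconst : (fun y => ∑ s, Φ y i s * Ψ y s a)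
      = (fun _ => (1 : Matrix (Fin n) (Fin n) ℝ) i a) := by
    funext y
    rw [← Matrix.mul_apply, (hΦ y).2]
  have h0 : pder (fun y => ∑ s, Φ y i s * Ψ y s a) x j = 0 := by
    rw [hconst]
    unfold pder; simp
  rw [pder_sum _ _ (fun s _ =>
    ((((hΦsm i s).differentiable (by simp)).differentiableAt).fun_mul
      (((hΨ s a).differentiable (by simp)).differentiableAt))) j] at h0
  calc ∑ s, (Φ x i s * pder (fun y => Ψ y s a) x j
          + Ψ x s a * pder (fun y => Φ y i s) x j)
      = ∑ s, pder (fun y => Φ y i s * Ψ y s a) x j := by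
        refine Finset.sum_congr rfl fun s _ => ?_
        rw [pder_mul (((hΦsm i s).differentiable (by simp)).differentiableAt)
          (((hΨ s a).differentiable (by simp)).differentiableAt) j]
    _ = 0 := h0

/-- `∑_{s,a} Φ^i_s ∂_j Ψ^s_a Φ^a_K = −∂_j Φ^i_K` -/
lemma pder_inv_contract
    (hΨ : ∀ i j : Fin n, ContDiff ℝ (⊤ : ℕ∞) (fun x => Ψ x i j))
    (hΦsm : ∀ i j : Fin n, ContDiff ℝ (⊤ : ℕ∞) (fun x => Φ x i j))
    (hΦ : ∀ x, Ψ x * Φ x = 1 ∧ Φ x * Ψ x = 1)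
    (x : Fin n → ℝ) (i K j : Fin n) :
    ∑ s, ∑ a, Φ x i s * pder (fun y => Ψ y s a) x j * Φ x a K
      = - pder (fun y => Φ y i K) x j := by
  have h1 : ∀ a, ∑ s, Φ x i s * pder (fun y => Ψ y s a) x j
      = - ∑ s, Ψ x s a * pder (fun y => Φ y i s) x j := by
    intro a
    have := pder_inv_rel hΨ hΦsm hΦ x i a j
    rw [Finset.sum_add_distrib] at this
    linarith
  have hid : ∀ s k : Fin n, ∑ a, Ψ x s a * Φ x a k
      = (1 : Matrix (Fin n) (Fin n) ℝ) s k := by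
    intro s k
    rw [← Matrix.mul_apply, (hΦ x).1]
  calc ∑ s, ∑ a, Φ x i s * pder (fun y => Ψ y s a) x j * Φ x a K
      = ∑ a, (∑ s, Φ x i s * pder (fun y => Ψ y s a) x j) * Φ x a K := by
        rw [Finset.sum_comm]
        exact Finset.sum_congr rfl fun a _ => (Finset.sum_mul _ _ _).symm
    _ = ∑ a, (- ∑ s, Ψ x s a * pder (fun y => Φ y i s) x j) * Φ x a K :=
        Finset.sum_congr rfl fun a _ => by rw [h1 a]
    _ = - ∑ a, ∑ s, Ψ x s a * pder (fun y => Φ y i s) x j * Φ x a K := by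
        rw [← Finset.sum_neg_distrib]
        refine Finset.sum_congr rfl fun a _ => ?_
        rw [neg_mul, Finset.sum_mul]
    _ = - ∑ s, ∑ a, Ψ x s a * pder (fun y => Φ y i s) x j * Φ x a K := by
        rw [Finset.sum_comm]
    _ = - ∑ s, pder (fun y => Φ y i s) x j * (∑ a, Ψ x s a * Φ x a K) := by
        congr 1
        refine Finset.sum_congr rfl fun s _ => ?_
        rw [Finset.mul_sum]
        exact Finset.sum_congr rfl fun a _ => by ring
    _ = - pder (fun y => Φ y i K) x j := by
        congr 1
        calc ∑ s, pder (fun y => Φ y i s) x j * (∑ a, Ψ x s a * Φ x a K)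
            = ∑ s, pder (fun y => Φ y i s) x j
                * (1 : Matrix (Fin n) (Fin n) ℝ) s K :=
              Finset.sum_congr rfl fun s _ => by rw [hid s K]
          _ = pder (fun y => Φ y i K) x j := by
              simp [Matrix.one_apply]

/-- Hamel contraction -/
lemma hamel_contract
    (hΨ : ∀ i j : Fin n, ContDiff ℝ (⊤ : ℕ∞) (fun x => Ψ x i j))
    (hΦsm : ∀ i j : Fin n, ContDiff ℝ (⊤ : ℕ∞) (fun x => Φ x i j))
    (hΦ : ∀ x, Ψ x * Φ x = 1 ∧ Φ x * Ψ x = 1)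
    (x : Fin n → ℝ) (i K I : Fin n) :
    ∑ s, Φ x i s * hamel Ψ Φ x s K I
      = ∑ b, (pder (fun y => Φ y i I) x b * Φ x b K
              - pder (fun y => Φ y i K) x b * Φ x b I) := by
  unfold hamel
  have expand : ∑ s, Φ x i s * (∑ a, ∑ b,
        (pder (fun y => Ψ y s a) x b - pder (fun y => Ψ y s b) x a)
          * Φ x a K * Φ x b I)
      = (∑ s, ∑ a, ∑ b, Φ x i s * pder (fun y => Ψ y s a) x b * Φ x a K * Φ x b I)
        - (∑ s, ∑ a, ∑ b, Φ x i s * pder (fun y => Ψ y s b) x a * Φ x a K * Φ x b I) := by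
    rw [← Finset.sum_sub_distrib]
    refine Finset.sum_congr rfl fun s _ => ?_
    rw [Finset.mul_sum, ← Finset.sum_sub_distrib]
    refine Finset.sum_congr rfl fun a _ => ?_
    rw [Finset.mul_sum, ← Finset.sum_sub_distrib]
    refine Finset.sum_congr rfl fun b _ => ?_
    ring
  rw [expand]
  have hA : ∑ s, ∑ a, ∑ b, Φ x i s * pder (fun y => Ψ y s a) x b * Φ x a K * Φ x b I
      = ∑ b, (- pder (fun y => Φ y i K) x b) * Φ x b I := by
    rw [sum3_rot]
    refine Finset.sum_congr rfl fun b _ => ?_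
    rw [← pder_inv_contract hΨ hΦsm hΦ x i K b, Finset.sum_mul]
    refine Finset.sum_congr rfl fun s _ => ?_
    rw [Finset.sum_mul]
  have hB : ∑ s, ∑ a, ∑ b, Φ x i s * pder (fun y => Ψ y s b) x a * Φ x a K * Φ x b I
      = ∑ a, (- pder (fun y => Φ y i I) x a) * Φ x a K := by
    have swap : ∑ s, ∑ a, ∑ b, Φ x i s * pder (fun y => Ψ y s b) x a * Φ x a K * Φ x b I
        = ∑ a, ∑ s, ∑ b, Φ x i s * pder (fun y => Ψ y s b) x a * Φ x b I * Φ x a K := by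
      calc ∑ s, ∑ a, ∑ b, Φ x i s * pder (fun y => Ψ y s b) x a * Φ x a K * Φ x b I
          = ∑ a, ∑ s, ∑ b, Φ x i s * pder (fun y => Ψ y s b) x a * Φ x a K * Φ x b I :=
            Finset.sum_comm
        _ = ∑ a, ∑ s, ∑ b, Φ x i s * pder (fun y => Ψ y s b) x a * Φ x b I * Φ x a K := by
            refine Finset.sum_congr rfl fun a _ => Finset.sum_congr rfl fun s _ =>
              Finset.sum_congr rfl fun b _ => by ring
    rw [swap]
    refine Finset.sum_congr rfl fun a _ => ?_
    rw [← pder_inv_contract hΨ hΦsm hΦ x i I a, Finset.sum_mul]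
    refine Finset.sum_congr rfl fun s _ => ?_
    rw [Finset.sum_mul]
  rw [hA, hB, ← Finset.sum_sub_distrib]
  refine Finset.sum_congr rfl fun b _ => by ring
end Alg

lemma core_alg {n mm : ℕ} (I : Fin n) (φ : Fin n → Fin n → ℝ)
    (dφ : Fin n → Fin n → Fin n → ℝ) (g : Fin n → Fin n → ℝ)
    (uu v P dP lx f : Fin n → ℝ)
    (hv : ∀ b, v b = ∑ K, φ b K * uu K)
    (hg : ∀ i K, ∑ j, φ i j * g j K
      = ∑ b, (dφ i I b * φ b K - dφ i K b * φ b I))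
    (huu : ∀ K : Fin n, (K : ℕ) < mm → uu K = 0)
    (hBH : (∑ i, ((∑ b, v b * dφ i I b) * P i + φ i I * dP i))
      - (∑ j, (lx j + ∑ i, (∑ k, dφ i k j * uu k) * P i) * φ j I)
      - (∑ j, ∑ K ∈ Finset.univ.filter (fun K : Fin n => mm ≤ (K : ℕ)),
          (∑ i, φ i j * P i) * g j K * uu K)
      = ∑ j, φ j I * f j) :
    ∑ i, φ i I * (dP i - lx i - f i) = 0 := by
  classical
  set A := fun i => ∑ b, v b * dφ i I b with hA
  set B := fun i => ∑ b, ∑ k, dφ i k b * uu k * φ b I with hBdef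
  set C := fun i => ∑ K, uu K * (∑ b, (dφ i I b * φ b K - dφ i K b * φ b I)) with hC
  have hABC : ∀ i, A i - B i - C i = 0 := by
    intro i
    have hA' : A i = ∑ b, ∑ K, φ b K * uu K * dφ i I b := by
      simp only [hA]
      exact Finset.sum_congr rfl fun b _ => by rw [hv b, Finset.sum_mul]
    have hC' : C i = (∑ K, ∑ b, uu K * (dφ i I b * φ b K))
        - (∑ K, ∑ b, uu K * (dφ i K b * φ b I)) := by
      simp only [hC]
      rw [← Finset.sum_sub_distrib]
      refine Finset.sum_congr rfl fun K _ => ?_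
      rw [Finset.mul_sum, ← Finset.sum_sub_distrib]
      exact Finset.sum_congr rfl fun b _ => by ring
    have e1 : ∑ K, ∑ b, uu K * (dφ i I b * φ b K) = A i := by
      rw [hA', Finset.sum_comm]
      exact Finset.sum_congr rfl fun b _ => Finset.sum_congr rfl fun K _ => by ring
    have e2 : ∑ K, ∑ b, uu K * (dφ i K b * φ b I) = B i := by
      simp only [hBdef]
      rw [Finset.sum_comm]
      exact Finset.sum_congr rfl fun b _ => Finset.sum_congr rfl fun K _ => by ring
    rw [hC', e1, e2]; ring
  have hT1 : ∑ i, (A i * P i + φ i I * dP i)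
      = (∑ i, P i * A i) + ∑ i, φ i I * dP i := by
    rw [Finset.sum_add_distrib]
    congr 1
    exact Finset.sum_congr rfl fun i _ => by ring
  have hT2 : ∑ j, (lx j + ∑ i, (∑ k, dφ i k j * uu k) * P i) * φ j I
      = (∑ j, lx j * φ j I) + ∑ i, P i * B i := by
    have : ∀ j, (lx j + ∑ i, (∑ k, dφ i k j * uu k) * P i) * φ j I
        = lx j * φ j I + ∑ i, P i * (∑ k, dφ i k j * uu k * φ j I) := by
      intro j
      rw [add_mul, Finset.sum_mul]
      congr 1
      refine Finset.sum_congr rfl fun i _ => ?_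
      rw [Finset.sum_mul, Finset.sum_mul, Finset.mul_sum]
      exact Finset.sum_congr rfl fun k _ => by ring
    simp only [this]
    rw [Finset.sum_add_distrib]
    congr 1
    rw [Finset.sum_comm]
    refine Finset.sum_congr rfl fun i _ => ?_
    simp only [hBdef]
    rw [← Finset.mul_sum]
  have hT3 : ∑ j, ∑ K ∈ Finset.univ.filter (fun K : Fin n => mm ≤ (K : ℕ)),
        (∑ i, φ i j * P i) * g j K * uu K
      = ∑ i, P i * C i := by
    have hfull : ∀ j, ∑ K ∈ Finset.univ.filter (fun K : Fin n => mm ≤ (K : ℕ)),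
        (∑ i, φ i j * P i) * g j K * uu K
        = ∑ K, (∑ i, φ i j * P i) * g j K * uu K := by
      intro j
      refine Finset.sum_subset (Finset.filter_subset _ _) ?_
      intro K _ hK
      simp only [Finset.mem_filter, Finset.mem_univ, true_and, not_le] at hK
      rw [huu K hK, mul_zero]
    simp only [hfull]
    calc ∑ j, ∑ K, (∑ i, φ i j * P i) * g j K * uu K
        = ∑ j, ∑ K, ∑ i, P i * (uu K * (φ i j * g j K)) := by
          refine Finset.sum_congr rfl fun j _ => Finset.sum_congr rfl fun K _ => ?_
          rw [Finset.sum_mul, Finset.sum_mul]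
          exact Finset.sum_congr rfl fun i _ => by ring
      _ = ∑ i, ∑ K, ∑ j, P i * (uu K * (φ i j * g j K)) := by
          calc ∑ j, ∑ K, ∑ i, P i * (uu K * (φ i j * g j K))
              = ∑ j, ∑ i, ∑ K, P i * (uu K * (φ i j * g j K)) :=
                Finset.sum_congr rfl fun j _ => Finset.sum_comm
            _ = ∑ i, ∑ j, ∑ K, P i * (uu K * (φ i j * g j K)) := Finset.sum_comm
            _ = ∑ i, ∑ K, ∑ j, P i * (uu K * (φ i j * g j K)) :=
                Finset.sum_congr rfl fun i _ => Finset.sum_comm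
      _ = ∑ i, P i * C i := by
          refine Finset.sum_congr rfl fun i _ => ?_
          simp only [hC]
          rw [Finset.mul_sum]
          refine Finset.sum_congr rfl fun K _ => ?_
          rw [← hg i K, Finset.mul_sum, Finset.mul_sum]
  rw [hT1, hT2, hT3] at hBH
  have hzero : ∑ i, P i * A i - ∑ i, P i * B i - ∑ i, P i * C i = 0 := by
    rw [← Finset.sum_sub_distrib, ← Finset.sum_sub_distrib]
    rw [show (0:ℝ) = ∑ _i : Fin n, (0:ℝ) by simp]
    refine Finset.sum_congr rfl fun i _ => ?_
    calc P i * A i - P i * B i - P i * C i = P i * (A i - B i - C i) := by ring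
      _ = 0 := by rw [hABC i, mul_zero]
  have hgoal : ∑ i, φ i I * (dP i - lx i - f i)
      = (∑ i, φ i I * dP i) - (∑ i, lx i * φ i I) - ∑ i, φ i I * f i := by
    rw [← Finset.sum_sub_distrib, ← Finset.sum_sub_distrib]
    exact Finset.sum_congr rfl fun i _ => by ring
  rw [hgoal]
  linarith [hBH, hzero]


section Key
variable {n m : ℕ}

lemma key_pointwise
    (Ψ Φ : (Fin n → ℝ) → Matrix (Fin n) (Fin n) ℝ)
    (hΨ : ∀ i j : Fin n, ContDiff ℝ (⊤ : ℕ∞) (fun x => Ψ x i j))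
    (hΦ : ∀ x, Ψ x * Φ x = 1 ∧ Φ x * Ψ x = 1)
    (L : (Fin n → ℝ) → (Fin n → ℝ) → ℝ)
    (hL : ContDiff ℝ 2 (fun p : (Fin n → ℝ) × (Fin n → ℝ) => L p.1 p.2))
    (F : Fin n → (Fin n → ℝ) → (Fin n → ℝ) → ℝ)
    (γ : ℝ → Fin n → ℝ) (hγ : ContDiff ℝ 2 γ)
    (hconstr : ∀ t, ∀ σ : Fin n, (σ : ℕ) < m → cvel Ψ γ t σ = 0)
    (hBH : ∀ t, ∀ I : Fin n, m ≤ (I : ℕ) →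
      deriv (fun t' => pder (scriptL L Φ (γ t')) (cvel Ψ γ t') I) t
        - (∑ j, pder (fun y => scriptL L Φ y (cvel Ψ γ t)) (γ t) j * Φ (γ t) j I)
        - (∑ j, ∑ K ∈ Finset.univ.filter (fun K : Fin n => m ≤ (K : ℕ)),
            pder (scriptL L Φ (γ t)) (cvel Ψ γ t) j * hamel Ψ Φ (γ t) j K I * cvel Ψ γ t K)
      = ∑ j, Φ (γ t) j I * F j (γ t) (deriv γ t))
    (t : ℝ) (I : Fin n) (hI : m ≤ (I : ℕ)) :
    ∑ i, Φ (γ t) i I *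
      (deriv (fun t' => fderiv ℝ (fun p : (Fin n → ℝ) × (Fin n → ℝ) => L p.1 p.2)
          (γ t', deriv γ t') (0, Pi.single i 1)) t
        - fderiv ℝ (fun p : (Fin n → ℝ) × (Fin n → ℝ) => L p.1 p.2)
            (γ t, deriv γ t) (Pi.single i 1, 0)
        - F i (γ t) (deriv γ t)) = 0 := by
  classical
  have hΦsm := contDiff_Phi hΨ hΦ
  have hγd : ∀ s, HasDerivAt γ (deriv γ s) s :=
    fun s => ((hγ.differentiable (by simp)).differentiableAt).hasDerivAt
  have hcv : ∀ s, cvel Ψ γ s = Ψ (γ s) *ᵥ deriv γ s := by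
    intro s
    funext j
    simp only [cvel, Matrix.mulVec, dotProduct]
    refine Finset.sum_congr rfl fun i _ => ?_
    congr 1
    exact (hasDerivAt_pi.1 (hγd s) i).deriv
  have hdv : ∀ s, Φ (γ s) *ᵥ cvel Ψ γ s = deriv γ s := by
    intro s
    rw [hcv s, Matrix.mulVec_mulVec, (hΦ (γ s)).2, Matrix.one_mulVec]
  -- regularity of the momentum functions
  have hγ' : ContDiff ℝ 1 (deriv γ) := by
    rw [show (2 : WithTop ℕ∞) = 1 + 1 by norm_num] at hγ
    exact (contDiff_succ_iff_deriv.mp hγ).2.2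
  have hcurve : ContDiff ℝ 1 (fun s => ((γ s, deriv γ s) : (Fin n → ℝ) × (Fin n → ℝ))) :=
    (hγ.of_le one_le_two).prodMk hγ'
  have hD : ContDiff ℝ 1 (fderiv ℝ (fun p : (Fin n → ℝ) × (Fin n → ℝ) => L p.1 p.2)) :=
    hL.fderiv_right (by norm_num)
  have hPC1 : ∀ i : Fin n, ContDiff ℝ 1 (fun s =>
      fderiv ℝ (fun p : (Fin n → ℝ) × (Fin n → ℝ) => L p.1 p.2)
        (γ s, deriv γ s) (0, Pi.single i 1)) :=
    fun i => (hD.comp hcurve).clm_apply contDiff_const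
  -- pointwise formula for the quasi-velocity derivative of ℒ
  have hPfact : ∀ (s : ℝ) (J : Fin n), pder (scriptL L Φ (γ s)) (cvel Ψ γ s) J
      = ∑ i, Φ (γ s) i J *
          fderiv ℝ (fun p : (Fin n → ℝ) × (Fin n → ℝ) => L p.1 p.2)
            (γ s, deriv γ s) (0, Pi.single i 1) := by
    intro s J
    rw [pder_scriptL_u hL (γ s) (cvel Ψ γ s) J, hdv s]
  -- C1 : derivative term
  have hDerivTerm : deriv (fun t' => pder (scriptL L Φ (γ t')) (cvel Ψ γ t') I) t
      = ∑ i, ((∑ b, deriv γ t b * pder (fun y => Φ y i I) (γ t) b) *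
            fderiv ℝ (fun p : (Fin n → ℝ) × (Fin n → ℝ) => L p.1 p.2)
              (γ t, deriv γ t) (0, Pi.single i 1)
          + Φ (γ t) i I * deriv (fun s =>
              fderiv ℝ (fun p : (Fin n → ℝ) × (Fin n → ℝ) => L p.1 p.2)
                (γ s, deriv γ s) (0, Pi.single i 1)) t) := by
    have hfunext : (fun t' => pder (scriptL L Φ (γ t')) (cvel Ψ γ t') I)
        = fun t' => ∑ i, Φ (γ t') i I *
            fderiv ℝ (fun p : (Fin n → ℝ) × (Fin n → ℝ) => L p.1 p.2)
              (γ t', deriv γ t') (0, Pi.single i 1) := funext fun s => hPfact s I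
    rw [hfunext]
    have hterms : ∀ i : Fin n, HasDerivAt (fun s => Φ (γ s) i I *
          fderiv ℝ (fun p : (Fin n → ℝ) × (Fin n → ℝ) => L p.1 p.2)
            (γ s, deriv γ s) (0, Pi.single i 1))
        ((∑ b, deriv γ t b * pder (fun y => Φ y i I) (γ t) b) *
            fderiv ℝ (fun p : (Fin n → ℝ) × (Fin n → ℝ) => L p.1 p.2)
              (γ t, deriv γ t) (0, Pi.single i 1)
          + Φ (γ t) i I * deriv (fun s =>
              fderiv ℝ (fun p : (Fin n → ℝ) × (Fin n → ℝ) => L p.1 p.2)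
                (γ s, deriv γ s) (0, Pi.single i 1)) t) t := by
      intro i
      have h1 : HasDerivAt (fun s => Φ (γ s) i I)
          (∑ b, deriv γ t b * pder (fun y => Φ y i I) (γ t) b) t :=
        hasDerivAt_comp_curve (((hΦsm i I).differentiable (by simp)).differentiableAt) (hγd t)
      have h2 := (((hPC1 i).differentiable (by simp)) t).hasDerivAt
      exact h1.mul h2
    exact (HasDerivAt.fun_sum (fun i _ => hterms i)).deriv
  -- assemble
  have hBH' := hBH t I hI
  rw [hDerivTerm] at hBH'
  have h2nd : (∑ j, pder (fun y => scriptL L Φ y (cvel Ψ γ t)) (γ t) j * Φ (γ t) j I)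
      = ∑ j, (fderiv ℝ (fun p : (Fin n → ℝ) × (Fin n → ℝ) => L p.1 p.2)
            (γ t, deriv γ t) (Pi.single j 1, 0)
          + ∑ i, (∑ k, pder (fun y => Φ y i k) (γ t) j * cvel Ψ γ t k) *
              fderiv ℝ (fun p : (Fin n → ℝ) × (Fin n → ℝ) => L p.1 p.2)
                (γ t, deriv γ t) (0, Pi.single i 1)) * Φ (γ t) j I := by
    refine Finset.sum_congr rfl fun j _ => ?_
    congr 1
    have := pder_scriptL_x hL hΦsm (γ t) (cvel Ψ γ t) j
    rwa [hdv t] at this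
  rw [h2nd] at hBH'
  have h3rd : (∑ j, ∑ K ∈ Finset.univ.filter (fun K : Fin n => m ≤ (K : ℕ)),
        pder (scriptL L Φ (γ t)) (cvel Ψ γ t) j * hamel Ψ Φ (γ t) j K I * cvel Ψ γ t K)
      = ∑ j, ∑ K ∈ Finset.univ.filter (fun K : Fin n => m ≤ (K : ℕ)),
          (∑ i, Φ (γ t) i j *
            fderiv ℝ (fun p : (Fin n → ℝ) × (Fin n → ℝ) => L p.1 p.2)
              (γ t, deriv γ t) (0, Pi.single i 1)) * hamel Ψ Φ (γ t) j K I * cvel Ψ γ t K := by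
    refine Finset.sum_congr rfl fun j _ => Finset.sum_congr rfl fun K _ => ?_
    rw [hPfact t j]
  rw [h3rd] at hBH'
  exact core_alg I (fun i j => Φ (γ t) i j)
    (fun i k b => pder (fun y => Φ y i k) (γ t) b)
    (fun j K => hamel Ψ Φ (γ t) j K I)
    (cvel Ψ γ t) (deriv γ t)
    (fun i => fderiv ℝ (fun p : (Fin n → ℝ) × (Fin n → ℝ) => L p.1 p.2)
      (γ t, deriv γ t) (0, Pi.single i 1))
    (fun i => deriv (fun s =>
      fderiv ℝ (fun p : (Fin n → ℝ) × (Fin n → ℝ) => L p.1 p.2)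
        (γ s, deriv γ s) (0, Pi.single i 1)) t)
    (fun j => fderiv ℝ (fun p : (Fin n → ℝ) × (Fin n → ℝ) => L p.1 p.2)
      (γ t, deriv γ t) (Pi.single j 1, 0))
    (fun j => F j (γ t) (deriv γ t))
    (fun b => by conv_lhs => rw [← hdv t]
                 simp [Matrix.mulVec, dotProduct])
    (fun i K => hamel_contract hΨ hΦsm hΦ (γ t) i K I)
    (fun K hK => hconstr t K hK)
    hBH'

end Key


/-! ### Variation machinery -/

def uncur {n : ℕ} (q : ℝ → ℝ → Fin n → ℝ) : ℝ × ℝ → Fin n → ℝ := fun p => q p.1 p.2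

def vT {n : ℕ} (q : ℝ → ℝ → Fin n → ℝ) : ℝ × ℝ → Fin n → ℝ :=
  fun p => fderiv ℝ (uncur q) p (0, 1)

def vS {n : ℕ} (q : ℝ → ℝ → Fin n → ℝ) : ℝ × ℝ → Fin n → ℝ :=
  fun p => fderiv ℝ (uncur q) p (1, 0)

def Gmap {n : ℕ} (L : (Fin n → ℝ) → (Fin n → ℝ) → ℝ) (q : ℝ → ℝ → Fin n → ℝ) :
    ℝ × ℝ → ℝ := fun p => L (uncur q p) (vT q p)

def Gsmap {n : ℕ} (L : (Fin n → ℝ) → (Fin n → ℝ) → ℝ) (q : ℝ → ℝ → Fin n → ℝ) :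
    ℝ × ℝ → ℝ := fun p => fderiv ℝ (Gmap L q) p (1, 0)

/-- **The Boltzmann–Hamel equations imply the Lagrange–D'Alembert principle.**
If a curve satisfies the constraints `u^σ = 0` (`σ ∈ {1,…,m}`) and the Boltzmann–Hamel
equations with applied force components `Q_I = Φ^j_I F_j`, then for every proper variation
satisfying the virtual–work condition `δθ^σ ≡ 0`, the first variation of the action plus the
virtual work of the applied forces vanishes. -/
theorem boltzmann_hamel_implies_lagrange_dalembert {n m : ℕ}
    (hm : m < n)
    (Ψ Φ : (Fin n → ℝ) → Matrix (Fin n) (Fin n) ℝ)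
    (hΨ : ∀ i j : Fin n, ContDiff ℝ (⊤ : ℕ∞) (fun x => Ψ x i j))
    (hΦ : ∀ x, Ψ x * Φ x = 1 ∧ Φ x * Ψ x = 1)
    (L : (Fin n → ℝ) → (Fin n → ℝ) → ℝ)
    (hL : ContDiff ℝ 2 (fun p : (Fin n → ℝ) × (Fin n → ℝ) => L p.1 p.2))
    (F : Fin n → (Fin n → ℝ) → (Fin n → ℝ) → ℝ)
    (hF : ∀ i, Continuous (fun p : (Fin n → ℝ) × (Fin n → ℝ) => F i p.1 p.2))
    (a b : ℝ) (hab : a < b)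
    (γ : ℝ → Fin n → ℝ) (hγ : ContDiff ℝ 2 γ)
    -- the nonholonomic constraints `u^σ = 0` hold along `γ`
    (hconstr : ∀ t, ∀ σ : Fin n, (σ : ℕ) < m → cvel Ψ γ t σ = 0)
    -- the Boltzmann–Hamel equations hold along `γ` for the unconstrained indices
    (hBH : ∀ t, ∀ I : Fin n, m ≤ (I : ℕ) →
      deriv (fun t' => pder (scriptL L Φ (γ t')) (cvel Ψ γ t') I) t
        - (∑ j, pder (fun y => scriptL L Φ y (cvel Ψ γ t)) (γ t) j * Φ (γ t) j I)
        - (∑ j, ∑ K ∈ Finset.univ.filter (fun K : Fin n => m ≤ (K : ℕ)),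
            pder (scriptL L Φ (γ t)) (cvel Ψ γ t) j * hamel Ψ Φ (γ t) j K I * cvel Ψ γ t K)
      = ∑ j, Φ (γ t) j I * F j (γ t) (deriv γ t)) :
    -- then: for every proper C² variation of `γ` obeying the Principle of Virtual Work,
    ∀ q : ℝ → ℝ → Fin n → ℝ,
      ContDiff ℝ 2 (fun p : ℝ × ℝ => q p.1 p.2) →
      (∀ t, q 0 t = γ t) →
      (∀ s, q s a = γ a ∧ q s b = γ b) →
      (∀ s t, ∀ σ : Fin n, (σ : ℕ) < m → qvar Ψ q s t σ = 0) →
      deriv (fun s => ∫ t in a..b, L (q s t) (fun i => deriv (fun t' => q s t' i) t)) 0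
        + (∫ t in a..b, ∑ i, F i (γ t) (deriv γ t) * deriv (fun s' => q s' t i) 0) = 0 := by
  intro q hq hq0 hqab hqvar
  classical
  have hΦsm := contDiff_Phi hΨ hΦ
  have hγd : ∀ s, HasDerivAt γ (deriv γ s) s :=
    fun s => ((hγ.differentiable (by simp)).differentiableAt).hasDerivAt
  have hγ' : ContDiff ℝ 1 (deriv γ) := by
    have hγ2 := hγ
    rw [show (2 : WithTop ℕ∞) = 1 + 1 by norm_num] at hγ2
    exact (contDiff_succ_iff_deriv.mp hγ2).2.2
  -- the variation as a two-variable map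
  have hqu : ContDiff ℝ 2 (uncur q) := hq
  have hQd : Differentiable ℝ (uncur q) := hqu.differentiable (by simp)
  have hQfd : ContDiff ℝ 1 (fderiv ℝ (uncur q)) := hqu.fderiv_right (by norm_num)
  have hVC1 : ContDiff ℝ 1 (vT q) := hQfd.clm_apply contDiff_const
  have hWC1 : ContDiff ℝ 1 (vS q) := hQfd.clm_apply contDiff_const
  have hVeq : ∀ s t : ℝ, (fun i => deriv (fun t' => q s t' i) t) = vT q (s, t) := by
    intro s t
    funext i
    simpa [vT, uncur] using (hasDerivAt_pi.1 (hasDerivAt_slice_right (hQd (s, t))) i).deriv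
  have hWeq : ∀ s t : ℝ, (fun i => deriv (fun s' => q s' t i) 0) = vS q (0, t) := by
    intro s t
    funext i
    simpa [vS, uncur] using (hasDerivAt_pi.1 (hasDerivAt_slice_left (hQd (0, t))) i).deriv
  -- along s = 0 the variation is γ
  have hQ0 : ∀ t, uncur q (0, t) = γ t := fun t => hq0 t
  have hVγ : ∀ t, vT q (0, t) = deriv γ t := by
    intro t
    rw [← hVeq 0 t]
    funext i
    rw [show (fun t' => q 0 t' i) = fun t' => γ t' i from funext fun t' => by rw [hq0 t']]
    exact (hasDerivAt_pi.1 (hγd t) i).deriv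
  -- the integrand
  have hGC1 : ContDiff ℝ 1 (Gmap L q) :=
    (hL.of_le one_le_two).comp ((hqu.of_le one_le_two).prodMk hVC1)
  have hGd : Differentiable ℝ (Gmap L q) := hGC1.differentiable (by simp)
  have hGs_cont : Continuous (Gsmap L q) := by
    have h1 : Continuous (fderiv ℝ (Gmap L q)) := hGC1.continuous_fderiv (by simp)
    exact (ContinuousLinearMap.apply ℝ ℝ ((1 : ℝ), (0 : ℝ))).continuous.comp h1
  -- differentiation under the integral sign
  obtain ⟨C, hC⟩ := ((isCompact_Icc (a := (-1 : ℝ)) (b := 1)).prod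
    (isCompact_uIcc (a := a) (b := b))).exists_bound_of_continuousOn hGs_cont.continuousOn
  have hInt : HasDerivAt (fun s => ∫ t in a..b, Gmap L q (s, t)) (∫ t in a..b, Gsmap L q (0, t)) 0 := by
    have key := intervalIntegral.hasDerivAt_integral_of_dominated_loc_of_deriv_le
      (F := fun s t => Gmap L q (s, t)) (F' := fun s t => Gsmap L q (s, t)) (x₀ := (0 : ℝ))
      (a := a) (b := b) (s := Metric.ball 0 1) (bound := fun _ => C) (μ := MeasureTheory.volume)
      (Metric.ball_mem_nhds _ one_pos)
      (Filter.Eventually.of_forall fun x =>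
        ((hGC1.continuous.comp (Continuous.prodMk_right x)).aestronglyMeasurable))
      ((hGC1.continuous.comp (Continuous.prodMk_right (0 : ℝ))).intervalIntegrable a b)
      ((hGs_cont.comp (Continuous.prodMk_right (0 : ℝ))).aestronglyMeasurable)
      (Filter.Eventually.of_forall fun t ht x hx => by
        refine hC ((x, t)) ⟨?_, ?_⟩
        · have := Metric.mem_ball.mp hx
          simp only [Real.dist_eq, sub_zero] at this
          constructor <;> [linarith [abs_le.mp this.le] ; linarith [(abs_le.mp this.le).2]]
        · exact Set.mem_of_mem_of_subset ht Set.uIoc_subset_uIcc)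
      (intervalIntegrable_const)
      (Filter.Eventually.of_forall fun t ht x hx => hasDerivAt_slice_left (hGd (x, t)))
    exact key.2
  -- identify the action with the integral of G
  have hAction : (fun s => ∫ t in a..b, L (q s t) (fun i => deriv (fun t' => q s t' i) t))
      = fun s => ∫ t in a..b, Gmap L q (s, t) := by
    funext s
    refine intervalIntegral.integral_congr fun t _ => ?_
    show L (q s t) (fun i => deriv (fun t' => q s t' i) t) = L (uncur q (s, t)) (vT q (s, t))
    rw [hVeq s t]
    rfl
  -- second-derivative symmetry
  have hQfd2 : Differentiable ℝ (fderiv ℝ (uncur q)) := hQfd.differentiable (by simp)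
  have hvTd : Differentiable ℝ (vT q) := hVC1.differentiable (by simp)
  have hvSd : Differentiable ℝ (vS q) := hWC1.differentiable (by simp)
  have hvT_fd : ∀ p w : ℝ × ℝ,
      fderiv ℝ (vT q) p w = (fderiv ℝ (fderiv ℝ (uncur q)) p w) (0, 1) := by
    intro p w
    have hcomp := ((ContinuousLinearMap.apply ℝ (Fin n → ℝ) (((0 : ℝ), (1 : ℝ)) : ℝ × ℝ)).hasFDerivAt.comp
      p (hQfd2 p).hasFDerivAt)
    have hcomp2 : HasFDerivAt (vT q)
        ((ContinuousLinearMap.apply ℝ (Fin n → ℝ) (((0 : ℝ), (1 : ℝ)) : ℝ × ℝ)).comp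
          (fderiv ℝ (fderiv ℝ (uncur q)) p)) p := hcomp
    rw [hcomp2.fderiv]
    rfl
  have hvS_fd : ∀ p w : ℝ × ℝ,
      fderiv ℝ (vS q) p w = (fderiv ℝ (fderiv ℝ (uncur q)) p w) (1, 0) := by
    intro p w
    have hcomp := ((ContinuousLinearMap.apply ℝ (Fin n → ℝ) (((1 : ℝ), (0 : ℝ)) : ℝ × ℝ)).hasFDerivAt.comp
      p (hQfd2 p).hasFDerivAt)
    have hcomp2 : HasFDerivAt (vS q)
        ((ContinuousLinearMap.apply ℝ (Fin n → ℝ) (((1 : ℝ), (0 : ℝ)) : ℝ × ℝ)).comp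
          (fderiv ℝ (fderiv ℝ (uncur q)) p)) p := hcomp
    rw [hcomp2.fderiv]
    rfl
  have hsym : ∀ t : ℝ, fderiv ℝ (vT q) (0, t) (1, 0) = fderiv ℝ (vS q) (0, t) (0, 1) := by
    intro t
    rw [hvT_fd, hvS_fd]
    exact (hqu.contDiffAt.isSymmSndFDerivAt (by simp [minSmoothness_of_isRCLikeNormedField])) (1, 0) (0, 1)
  -- expansion of the s-derivative of the integrand at s = 0
  have hGs0 : ∀ t : ℝ, Gsmap L q (0, t)
      = ∑ i, vS q (0, t) i *
          fderiv ℝ (fun p : (Fin n → ℝ) × (Fin n → ℝ) => L p.1 p.2)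
            (γ t, deriv γ t) (Pi.single i 1, 0)
        + ∑ i, fderiv ℝ (vS q) (0, t) (0, 1) i *
          fderiv ℝ (fun p : (Fin n → ℝ) × (Fin n → ℝ) => L p.1 p.2)
            (γ t, deriv γ t) (0, Pi.single i 1) := by
    intro t
    have hpair : HasFDerivAt (fun p : ℝ × ℝ => ((uncur q p, vT q p) : (Fin n → ℝ) × (Fin n → ℝ)))
        ((fderiv ℝ (uncur q) (0, t)).prod (fderiv ℝ (vT q) (0, t))) (0, t) :=
      ((hQd (0, t)).hasFDerivAt).prodMk ((hvTd (0, t)).hasFDerivAt)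
    have hLd : DifferentiableAt ℝ (fun p : (Fin n → ℝ) × (Fin n → ℝ) => L p.1 p.2)
        (uncur q (0, t), vT q (0, t)) := (hL.differentiable (by simp)).differentiableAt
    have hcomp := hLd.hasFDerivAt.comp (0, t) hpair
    have hres : Gsmap L q (0, t)
        = fderiv ℝ (fun p : (Fin n → ℝ) × (Fin n → ℝ) => L p.1 p.2)
            (uncur q (0, t), vT q (0, t))
            (fderiv ℝ (uncur q) (0, t) (1, 0), fderiv ℝ (vT q) (0, t) (1, 0)) := by
      show fderiv ℝ (Gmap L q) (0, t) (1, 0) = _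
      rw [show Gmap L q = (fun p : (Fin n → ℝ) × (Fin n → ℝ) => L p.1 p.2) ∘
          (fun p : ℝ × ℝ => ((uncur q p, vT q p) : (Fin n → ℝ) × (Fin n → ℝ))) from rfl,
        hcomp.fderiv]
      rfl
    rw [hres, hQ0 t, hVγ t, hsym t]
    rw [show (fderiv ℝ (uncur q) (0, t) (1, 0)) = vS q (0, t) from rfl]
    rw [clm_split, clm_fst_apply, clm_snd_apply]
  -- momentum functions are C¹
  have hcurve : ContDiff ℝ 1 (fun s => ((γ s, deriv γ s) : (Fin n → ℝ) × (Fin n → ℝ))) :=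
    (hγ.of_le one_le_two).prodMk hγ'
  have hD : ContDiff ℝ 1 (fderiv ℝ (fun p : (Fin n → ℝ) × (Fin n → ℝ) => L p.1 p.2)) :=
    hL.fderiv_right (by norm_num)
  have hPC1 : ∀ i : Fin n, ContDiff ℝ 1 (fun s : ℝ =>
      fderiv ℝ (fun p : (Fin n → ℝ) × (Fin n → ℝ) => L p.1 p.2)
        (γ s, deriv γ s) (0, Pi.single i 1)) :=
    fun i => (hD.comp hcurve).clm_apply contDiff_const
  have hLxC : ∀ i : Fin n, ContDiff ℝ 1 (fun s : ℝ =>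
      fderiv ℝ (fun p : (Fin n → ℝ) × (Fin n → ℝ) => L p.1 p.2)
        (γ s, deriv γ s) (Pi.single i 1, 0)) :=
    fun i => (hD.comp hcurve).clm_apply contDiff_const
  have hδC1 : ∀ i : Fin n, ContDiff ℝ 1 (fun t : ℝ => vS q (0, t) i) :=
    fun i => (contDiff_pi.mp (hWC1.comp (contDiff_const.prodMk contDiff_id))) i
  -- the component form of δq via hWeq
  have hWeq' : ∀ t : ℝ, ∀ i : Fin n, deriv (fun s' => q s' t i) 0 = vS q (0, t) i :=
    fun t i => congrFun (hWeq 0 t) i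
  -- the variation satisfies δq = Φ δθ
  have hdelta_rec : ∀ t, vS q (0, t) = Φ (γ t) *ᵥ qvar Ψ q 0 t := by
    intro t
    have h1 : qvar Ψ q 0 t = Ψ (γ t) *ᵥ vS q (0, t) := by
      funext j
      simp only [qvar, Matrix.mulVec, dotProduct]
      refine Finset.sum_congr rfl fun i _ => ?_
      rw [hq0 t, hWeq' t i]
    rw [h1, Matrix.mulVec_mulVec, (hΦ (γ t)).2, Matrix.one_mulVec]
  -- the key pointwise identity from the Boltzmann–Hamel equations
  have hkey := key_pointwise Ψ Φ hΨ hΦ L hL F γ hγ hconstr hBH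
  have hsum0 : ∀ t, ∑ i,
      (deriv (fun s : ℝ => fderiv ℝ (fun p : (Fin n → ℝ) × (Fin n → ℝ) => L p.1 p.2)
          (γ s, deriv γ s) (0, Pi.single i 1)) t
        - fderiv ℝ (fun p : (Fin n → ℝ) × (Fin n → ℝ) => L p.1 p.2)
            (γ t, deriv γ t) (Pi.single i 1, 0)
        - F i (γ t) (deriv γ t)) * vS q (0, t) i = 0 := by
    intro t
    have hrec : ∀ i : Fin n, vS q (0, t) i = ∑ j, Φ (γ t) i j * qvar Ψ q 0 t j := by
      intro i
      rw [hdelta_rec t]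
      simp [Matrix.mulVec, dotProduct]
    calc ∑ i, (deriv (fun s : ℝ => fderiv ℝ (fun p : (Fin n → ℝ) × (Fin n → ℝ) => L p.1 p.2)
          (γ s, deriv γ s) (0, Pi.single i 1)) t
        - fderiv ℝ (fun p : (Fin n → ℝ) × (Fin n → ℝ) => L p.1 p.2)
            (γ t, deriv γ t) (Pi.single i 1, 0)
        - F i (γ t) (deriv γ t)) * vS q (0, t) i
        = ∑ i, ∑ j, Φ (γ t) i j *
            (deriv (fun s : ℝ => fderiv ℝ (fun p : (Fin n → ℝ) × (Fin n → ℝ) => L p.1 p.2)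
              (γ s, deriv γ s) (0, Pi.single i 1)) t
            - fderiv ℝ (fun p : (Fin n → ℝ) × (Fin n → ℝ) => L p.1 p.2)
                (γ t, deriv γ t) (Pi.single i 1, 0)
            - F i (γ t) (deriv γ t)) * qvar Ψ q 0 t j := by
          refine Finset.sum_congr rfl fun i _ => ?_
          rw [hrec i, Finset.mul_sum]
          refine Finset.sum_congr rfl fun j _ => by ring
      _ = ∑ j, (∑ i, Φ (γ t) i j *
            (deriv (fun s : ℝ => fderiv ℝ (fun p : (Fin n → ℝ) × (Fin n → ℝ) => L p.1 p.2)
              (γ s, deriv γ s) (0, Pi.single i 1)) t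
            - fderiv ℝ (fun p : (Fin n → ℝ) × (Fin n → ℝ) => L p.1 p.2)
                (γ t, deriv γ t) (Pi.single i 1, 0)
            - F i (γ t) (deriv γ t))) * qvar Ψ q 0 t j := by
          rw [Finset.sum_comm]
          exact Finset.sum_congr rfl fun j _ => (Finset.sum_mul _ _ _).symm
      _ = 0 := by
          refine Finset.sum_eq_zero fun j _ => ?_
          by_cases hj : m ≤ (j : ℕ)
          · rw [hkey t j hj, zero_mul]
          · rw [hqvar 0 t j (lt_of_not_ge hj), mul_zero]
  -- R and its derivative
  have hRC1 : ContDiff ℝ 1 (fun t : ℝ => ∑ i,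
      fderiv ℝ (fun p : (Fin n → ℝ) × (Fin n → ℝ) => L p.1 p.2)
        (γ t, deriv γ t) (0, Pi.single i 1) * vS q (0, t) i) := by
    apply ContDiff.sum
    intro i _
    exact (hPC1 i).mul (hδC1 i)
  have hRderiv : ∀ t : ℝ, HasDerivAt (fun t' : ℝ => ∑ i,
      fderiv ℝ (fun p : (Fin n → ℝ) × (Fin n → ℝ) => L p.1 p.2)
        (γ t', deriv γ t') (0, Pi.single i 1) * vS q (0, t') i)
      (∑ i,
        (deriv (fun s : ℝ => fderiv ℝ (fun p : (Fin n → ℝ) × (Fin n → ℝ) => L p.1 p.2)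
            (γ s, deriv γ s) (0, Pi.single i 1)) t * vS q (0, t) i
        + fderiv ℝ (fun p : (Fin n → ℝ) × (Fin n → ℝ) => L p.1 p.2)
            (γ t, deriv γ t) (0, Pi.single i 1) * fderiv ℝ (vS q) (0, t) (0, 1) i)) t := by
    intro t
    refine HasDerivAt.fun_sum fun i _ => ?_
    have hPd : HasDerivAt (fun s : ℝ =>
        fderiv ℝ (fun p : (Fin n → ℝ) × (Fin n → ℝ) => L p.1 p.2)
          (γ s, deriv γ s) (0, Pi.single i 1))
        (deriv (fun s : ℝ =>
          fderiv ℝ (fun p : (Fin n → ℝ) × (Fin n → ℝ) => L p.1 p.2)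
            (γ s, deriv γ s) (0, Pi.single i 1)) t) t :=
      (((hPC1 i).differentiable (by simp)) t).hasDerivAt
    have hδd : HasDerivAt (fun t' : ℝ => vS q (0, t') i)
        (fderiv ℝ (vS q) (0, t) (0, 1) i) t :=
      hasDerivAt_pi.1 (hasDerivAt_slice_right (hvSd (0, t))) i
    exact hPd.mul hδd
  -- pointwise: integrand + virtual work = d/dt R
  have hPoint : ∀ t : ℝ, Gsmap L q (0, t)
      + (∑ i, F i (γ t) (deriv γ t) * deriv (fun s' => q s' t i) 0)
      = deriv (fun t' : ℝ => ∑ i,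
          fderiv ℝ (fun p : (Fin n → ℝ) × (Fin n → ℝ) => L p.1 p.2)
            (γ t', deriv γ t') (0, Pi.single i 1) * vS q (0, t') i) t := by
    intro t
    rw [(hRderiv t).deriv, hGs0 t]
    have hFr : (∑ i, F i (γ t) (deriv γ t) * deriv (fun s' => q s' t i) 0)
        = ∑ i, F i (γ t) (deriv γ t) * vS q (0, t) i :=
      Finset.sum_congr rfl fun i _ => by rw [hWeq' t i]
    rw [hFr]
    rw [Finset.sum_add_distrib]
    have hmon : ∑ i, deriv (fun s : ℝ =>
          fderiv ℝ (fun p : (Fin n → ℝ) × (Fin n → ℝ) => L p.1 p.2)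
            (γ s, deriv γ s) (0, Pi.single i 1)) t * vS q (0, t) i
        = (∑ i, vS q (0, t) i *
            fderiv ℝ (fun p : (Fin n → ℝ) × (Fin n → ℝ) => L p.1 p.2)
              (γ t, deriv γ t) (Pi.single i 1, 0))
          + ∑ i, F i (γ t) (deriv γ t) * vS q (0, t) i := by
      have h0 := hsum0 t
      have hexp : ∑ i, (deriv (fun s : ℝ =>
            fderiv ℝ (fun p : (Fin n → ℝ) × (Fin n → ℝ) => L p.1 p.2)
              (γ s, deriv γ s) (0, Pi.single i 1)) t
          - fderiv ℝ (fun p : (Fin n → ℝ) × (Fin n → ℝ) => L p.1 p.2)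
              (γ t, deriv γ t) (Pi.single i 1, 0)
          - F i (γ t) (deriv γ t)) * vS q (0, t) i
          = (∑ i, deriv (fun s : ℝ =>
              fderiv ℝ (fun p : (Fin n → ℝ) × (Fin n → ℝ) => L p.1 p.2)
                (γ s, deriv γ s) (0, Pi.single i 1)) t * vS q (0, t) i)
            - (∑ i, vS q (0, t) i *
                fderiv ℝ (fun p : (Fin n → ℝ) × (Fin n → ℝ) => L p.1 p.2)
                  (γ t, deriv γ t) (Pi.single i 1, 0))
            - ∑ i, F i (γ t) (deriv γ t) * vS q (0, t) i := by
        rw [← Finset.sum_sub_distrib, ← Finset.sum_sub_distrib]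
        exact Finset.sum_congr rfl fun i _ => by ring
      rw [hexp] at h0
      linarith [h0]
    rw [hmon]
    have hcomm : ∑ i, fderiv ℝ (fun p : (Fin n → ℝ) × (Fin n → ℝ) => L p.1 p.2)
          (γ t, deriv γ t) (0, Pi.single i 1) * fderiv ℝ (vS q) (0, t) (0, 1) i
        = ∑ i, fderiv ℝ (vS q) (0, t) (0, 1) i *
            fderiv ℝ (fun p : (Fin n → ℝ) × (Fin n → ℝ) => L p.1 p.2)
              (γ t, deriv γ t) (0, Pi.single i 1) :=
      Finset.sum_congr rfl fun i _ => by ring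
    rw [hcomm]
    ring
  -- boundary values of R vanish
  have hδa : ∀ i : Fin n, vS q (0, a) i = 0 := by
    intro i
    rw [← hWeq' a i]
    rw [show (fun s' => q s' a i) = fun _ => γ a i from funext fun s' => by rw [(hqab s').1]]
    exact deriv_const _ _
  have hδb : ∀ i : Fin n, vS q (0, b) i = 0 := by
    intro i
    rw [← hWeq' b i]
    rw [show (fun s' => q s' b i) = fun _ => γ b i from funext fun s' => by rw [(hqab s').2]]
    exact deriv_const _ _
  -- final assembly
  rw [hAction, hInt.deriv]
  have hcont2 : Continuous (fun t => ∑ i, F i (γ t) (deriv γ t) * deriv (fun s' => q s' t i) 0) := by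
    have : (fun t => ∑ i, F i (γ t) (deriv γ t) * deriv (fun s' => q s' t i) 0)
        = fun t => ∑ i, F i (γ t) (deriv γ t) * vS q (0, t) i := by
      funext t
      exact Finset.sum_congr rfl fun i _ => by rw [hWeq' t i]
    rw [this]
    refine continuous_finset_sum _ fun i _ => Continuous.mul ?_ ((hδC1 i).continuous)
    exact (hF i).comp ((hγ.continuous).prodMk hγ'.continuous)
  have h1int : IntervalIntegrable (fun t => Gsmap L q (0, t)) MeasureTheory.volume a b :=
    ((hGs_cont.comp (Continuous.prodMk_right (0 : ℝ))).intervalIntegrable a b)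
  have h2int : IntervalIntegrable
      (fun t => ∑ i, F i (γ t) (deriv γ t) * deriv (fun s' => q s' t i) 0)
      MeasureTheory.volume a b := hcont2.intervalIntegrable a b
  have hsumInt := intervalIntegral.integral_add h1int h2int
  rw [← hsumInt]
  have hstep : ∀ t ∈ Set.uIcc a b, Gsmap L q (0, t)
      + (∑ i, F i (γ t) (deriv γ t) * deriv (fun s' => q s' t i) 0)
      = deriv (fun t' : ℝ => ∑ i,
          fderiv ℝ (fun p : (Fin n → ℝ) × (Fin n → ℝ) => L p.1 p.2)
            (γ t', deriv γ t') (0, Pi.single i 1) * vS q (0, t') i) t :=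
    fun t _ => hPoint t
  rw [intervalIntegral.integral_congr hstep]
  rw [intervalIntegral.integral_deriv_eq_sub
    (fun x _ => (hRC1.differentiable (by simp) x))
    (((contDiff_one_iff_deriv.mp hRC1).2).intervalIntegrable a b)]
  rw [show (∑ i, fderiv ℝ (fun p : (Fin n → ℝ) × (Fin n → ℝ) => L p.1 p.2)
      (γ b, deriv γ b) (0, Pi.single i 1) * vS q (0, b) i) = 0 from
    Finset.sum_eq_zero fun i _ => by rw [hδb i, mul_zero]]
  rw [show (∑ i, fderiv ℝ (fun p : (Fin n → ℝ) × (Fin n → ℝ) => L p.1 p.2)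
      (γ a, deriv γ a) (0, Pi.single i 1) * vS q (0, a) i) = 0 from
    Finset.sum_eq_zero fun i _ => by rw [hδa i, mul_zero]]
  ring

end
end
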